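/- (Barbalat's lemma) If f: [0,∞) → R^n is uniformly continuous and f ∈ L², and f' is bounded, then f(t) → 0 as t → ∞. -/
import Mathlib


open MeasureTheory Filter

/-- Barbalat-type lemma: a uniformly continuous, square-integrable function with
bounded derivative tends to zero at infinity. -/
theorem barbalat (n : ℕ) (f f' : ℝ → EuclideanSpace ℝ (Fin n))
    (hUC : UniformContinuous f)
    (hL2 : IntegrableOn (fun t => ‖f t‖ ^ 2) (Set.Ici 0))
    (hderiv : ∀ t, HasDerivAt f (f' t) t)
    (hbdd : ∃ C : ℝ, ∀ t, ‖f' t‖ ≤ C) :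
    Tendsto f atTop (nhds 0) := by
  have hhUC : UniformContinuous (fun t => ‖f t‖) :=
    lipschitzWith_one_norm.uniformContinuous.comp hUC
  rw [tendsto_zero_iff_norm_tendsto_zero]
  by_contra hcon
  rw [Metric.tendsto_atTop] at hcon
  push_neg at hcon
  obtain ⟨ε, hε, hfreq⟩ := hcon
  obtain ⟨δ, hδ, hδ'⟩ := Metric.uniformContinuous_iff.mp hhUC (ε / 2) (by positivity)
  -- interval integrability of ‖f‖² on nonnegative intervals
  have hint : ∀ a b : ℝ, 0 ≤ a → a ≤ b →
      IntervalIntegrable (fun t => ‖f t‖ ^ 2) volume a b := by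
    intro a b ha hab
    rw [intervalIntegrable_iff_integrableOn_Ioc_of_le hab]
    exact hL2.mono_set (fun x hx => le_trans ha (le_of_lt hx.1))
  -- convergence of ∫₀^b ‖f‖²
  have hIoi : IntegrableOn (fun t => ‖f t‖ ^ 2) (Set.Ioi 0) :=
    hL2.mono_set Set.Ioi_subset_Ici_self
  set I : ℝ := ∫ x in Set.Ioi 0, ‖f x‖ ^ 2 with hI
  have htend : Tendsto (fun b => ∫ x in (0:ℝ)..b, ‖f x‖ ^ 2) atTop (nhds I) :=
    intervalIntegral_tendsto_integral_Ioi 0 hIoi tendsto_id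
  set c : ℝ := (δ / 2) * (ε / 2) ^ 2 with hc
  have hcpos : 0 < c := by positivity
  obtain ⟨N, hN⟩ := (Metric.tendsto_atTop.mp htend) (c / 2) (by positivity)
  obtain ⟨t, ht, htε⟩ := hfreq (max N 0)
  have ht0 : (0 : ℝ) ≤ t := le_trans (le_max_right N 0) ht
  have htN : N ≤ t := le_trans (le_max_left N 0) ht
  have hht : ε ≤ ‖f t‖ := by
    have : dist ‖f t‖ 0 = ‖f t‖ := by
      rw [Real.dist_eq, sub_zero, abs_of_nonneg (norm_nonneg _)]
    rwa [this] at htε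
  -- pointwise lower bound on [t, t + δ/2]
  have hlow : ∀ s ∈ Set.Icc t (t + δ / 2), (ε / 2) ^ 2 ≤ ‖f s‖ ^ 2 := by
    intro s hs
    have hdist : dist s t < δ := by
      rw [Real.dist_eq, abs_of_nonneg (by linarith [hs.1])]
      linarith [hs.2]
    have := hδ' hdist
    rw [Real.dist_eq, abs_sub_lt_iff] at this
    have h2 : ε / 2 ≤ ‖f s‖ := by linarith [this.2]
    have h2' : (0:ℝ) ≤ ε / 2 := by positivity
    exact pow_le_pow_left₀ h2' h2 2
  -- integral lower bound
  have hintlow : c ≤ ∫ x in t..(t + δ / 2), ‖f x‖ ^ 2 := by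
    have hle : t ≤ t + δ / 2 := by linarith
    have h1 : (∫ _x in t..(t + δ / 2), (ε / 2) ^ 2) ≤
        ∫ x in t..(t + δ / 2), ‖f x‖ ^ 2 :=
      intervalIntegral.integral_mono_on hle (intervalIntegrable_const)
        (hint t (t + δ / 2) ht0 hle) hlow
    rwa [intervalIntegral.integral_const, smul_eq_mul, add_sub_cancel_left] at h1
  -- additivity
  have hadd : (∫ x in (0:ℝ)..(t + δ / 2), ‖f x‖ ^ 2) =
      (∫ x in (0:ℝ)..t, ‖f x‖ ^ 2) + ∫ x in t..(t + δ / 2), ‖f x‖ ^ 2 :=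
    (intervalIntegral.integral_add_adjacent_intervals
      (hint 0 t le_rfl ht0) (hint t (t + δ / 2) ht0 (by linarith))).symm
  have hA := hN t htN
  have hB := hN (t + δ / 2) (by linarith)
  rw [Real.dist_eq, abs_sub_lt_iff] at hA hB
  linarith [hA.2, hB.1, hintlow, hadd.ge, hadd.le]
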